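/- Fix an integer t⋆ ≥ 0, p ∈ (0,1), and m ∈ {0,1,…,t⋆}. Define b(t) := ∑_{x=0}^{⌊(t−1)/(t⋆+1)⌋} C(t−(m+1)−x·t⋆, x) · 1[t−(m+1)−x(t⋆+1) ≥ 0] · p^{x+1} · (1−p)^{t−(m+1)−x(t⋆+1)}. Then b(t) → p/(1 + t⋆·p) as t → ∞; in particular the limit is independent of m. -/

import Mathlib

open Finset Filter Topology

/-! Write `T = t⋆` and `n = t - (m + 1)`. Then `b t = p · renewalSeq T p n`, where
`renewalSeq T p n` is the probability that a renewal occurs at time `n` when the gaps between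
renewals are `1` with probability `1 - p` and `T + 1` with probability `p`. Such a sequence
satisfies the renewal equation `u (n + T + 1) = (1 - p) u (n + T) + p u n`. Along any solution the
maximum and the minimum of `u` over a window of `T + 1` consecutive times are monotone, and their
gap shrinks by the factor `1 - p (1 - p) ^ T` every `T + 1` steps, so `u` converges. The quantity
`u (n + T) + p ∑_{k < T} u (n + k)` is conserved and equals `1` for the renewal sequence, which
pins the limit down to `1 / (1 + T p)`, the reciprocal of the mean gap. -/

def RenewalRecurrence (T : ℕ) (p : ℝ) (u : ℕ → ℝ) : Prop :=
  ∀ n, u (n + T + 1) = (1 - p) * u (n + T) + p * u n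

noncomputable def windowMax (T : ℕ) (u : ℕ → ℝ) (n : ℕ) : ℝ :=
  (range (T + 1)).sup' nonempty_range_add_one fun k => u (n + k)

/-- `windowMax T (-u) n` is minus the minimum of `u` over the window. -/
noncomputable def windowOsc (T : ℕ) (u : ℕ → ℝ) (n : ℕ) : ℝ :=
  windowMax T u n + windowMax T (-u) n

section Window

variable {T : ℕ} {u : ℕ → ℝ}

lemma le_windowMax {k : ℕ} (hk : k ≤ T) (n : ℕ) : u (n + k) ≤ windowMax T u n :=
  le_sup' (fun k => u (n + k)) (mem_range.2 (Nat.lt_succ_of_le hk))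

lemma self_le_windowMax (n : ℕ) : u n ≤ windowMax T u n :=
  le_windowMax (u := u) (Nat.zero_le T) n

lemma windowOsc_nonneg (n : ℕ) : 0 ≤ windowOsc T u n := by
  have h := self_le_windowMax (T := T) (u := u) n
  have h' := self_le_windowMax (T := T) (u := -u) n
  rw [Pi.neg_apply] at h'
  rw [windowOsc]
  linarith

end Window

namespace RenewalRecurrence

variable {T : ℕ} {p : ℝ} {u : ℕ → ℝ}

lemma neg (hu : RenewalRecurrence T p u) : RenewalRecurrence T p (-u) := fun n => by
  simp only [Pi.neg_apply, hu n]
  ring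

lemma conserved (hu : RenewalRecurrence T p u) (n : ℕ) :
    u (n + T) + p * ∑ k ∈ range T, u (n + k) = u T + p * ∑ k ∈ range T, u k := by
  induction n with
  | zero => simp only [zero_add]
  | succ n ih =>
    have hshift := (sum_range_succ' (fun k => u (n + k)) T).symm.trans
      (sum_range_succ (fun k => u (n + k)) T)
    simp only [add_zero, ← add_assoc, add_right_comm n _ 1] at hshift
    rw [← ih, add_right_comm, hu]
    linear_combination p * hshift

section Monotone

variable (hu : RenewalRecurrence T p u) (hp0 : 0 ≤ p) (hp1 : p ≤ 1)
include hu hp0 hp1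

lemma windowMax_succ_le (n : ℕ) : windowMax T u (n + 1) ≤ windowMax T u n := by
  refine sup'_le _ _ fun k hk => ?_
  rcases (Nat.lt_succ_iff.1 (mem_range.1 hk)).lt_or_eq with hk | hk
  · rw [add_assoc, add_comm 1 k]
    exact le_windowMax hk n
  · rw [hk, add_right_comm, hu]
    nlinarith [le_windowMax (u := u) (le_refl T) n, self_le_windowMax (T := T) (u := u) n]

lemma windowMax_antitone : Antitone (windowMax T u) :=
  antitone_nat_of_succ_le (windowMax_succ_le hu hp0 hp1)

lemma le_windowMax_sub {j : ℕ} (hj : j ≤ T) (n : ℕ) :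
    u (n + T + j + 1) ≤ windowMax T u n - p * (1 - p) ^ j * (windowMax T u n - u n) := by
  induction j with
  | zero =>
    rw [add_zero, hu]
    nlinarith [le_windowMax (u := u) (le_refl T) n]
  | succ j ih =>
    have hu' := hu (n + (j + 1))
    rw [show n + (j + 1) + T + 1 = n + T + (j + 1) + 1 by ring,
      show n + (j + 1) + T = n + T + j + 1 by ring] at hu'
    rw [hu', pow_succ]
    nlinarith [ih (by omega), le_windowMax (u := u) hj n]

lemma windowMax_add_le (n : ℕ) :
    windowMax T u (n + (T + 1)) ≤
      windowMax T u n - p * (1 - p) ^ T * (windowMax T u n - u n) := by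
  refine sup'_le _ _ fun k hk => ?_
  have hk : k ≤ T := Nat.lt_succ_iff.1 (mem_range.1 hk)
  have hpow : (1 - p) ^ T ≤ (1 - p) ^ k := pow_le_pow_of_le_one (by linarith) (by linarith) hk
  rw [show n + (T + 1) + k = n + T + k + 1 by ring]
  nlinarith [le_windowMax_sub hu hp0 hp1 hk n, self_le_windowMax (T := T) (u := u) n,
    mul_le_mul_of_nonneg_left hpow hp0]

end Monotone

variable (hu : RenewalRecurrence T p u) (hp0 : 0 < p) (hp1 : p < 1)
include hu hp0 hp1

lemma tendsto_windowOsc : Tendsto (windowOsc T u) atTop (𝓝 0) := by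
  have hanti : Antitone (windowOsc T u) :=
    (hu.windowMax_antitone hp0.le hp1.le).add (hu.neg.windowMax_antitone hp0.le hp1.le)
  have hlim := tendsto_atTop_ciInf hanti ⟨0, by
    rintro _ ⟨n, rfl⟩
    exact windowOsc_nonneg n⟩
  set c := p * (1 - p) ^ T
  have hc : 0 < c := mul_pos hp0 (pow_pos (by linarith) T)
  have hcontract (n : ℕ) : windowOsc T u (n + (T + 1)) ≤ (1 - c) * windowOsc T u n := by
    have h := hu.windowMax_add_le hp0.le hp1.le n
    have h' := hu.neg.windowMax_add_le hp0.le hp1.le n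
    rw [Pi.neg_apply] at h'
    simp only [windowOsc]
    linarith
  -- the limit `ℓ ≥ 0` satisfies `ℓ ≤ (1 - c) ℓ`
  have hle := le_of_tendsto_of_tendsto' (hlim.comp (tendsto_add_atTop_nat (T + 1)))
    (hlim.const_mul (1 - c)) hcontract
  have hnonneg := ge_of_tendsto' hlim windowOsc_nonneg
  rwa [show ⨅ n, windowOsc T u n = 0 by nlinarith] at hlim

lemma cauchySeq : CauchySeq u := by
  refine cauchySeq_of_le_tendsto_0 (windowOsc T u) (fun n m N hn hm => ?_)
    (hu.tendsto_windowOsc hp0 hp1)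
  have hmax := hu.windowMax_antitone hp0.le hp1.le
  have hmin := hu.neg.windowMax_antitone hp0.le hp1.le
  have hn₁ := (self_le_windowMax (T := T) (u := u) n).trans (hmax hn)
  have hm₁ := (self_le_windowMax (T := T) (u := u) m).trans (hmax hm)
  have hn₂ := (self_le_windowMax (T := T) (u := -u) n).trans (hmin hn)
  have hm₂ := (self_le_windowMax (T := T) (u := -u) m).trans (hmin hm)
  rw [Pi.neg_apply] at hn₂ hm₂
  rw [Real.dist_eq, abs_sub_le_iff, windowOsc]
  constructor <;> linarith

theorem tendsto :
    Tendsto u atTop (𝓝 ((u T + p * ∑ k ∈ range T, u k) / (1 + T * p))) := by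
  obtain ⟨L, hL⟩ := cauchySeq_tendsto_of_complete (hu.cauchySeq hp0 hp1)
  have hW : Tendsto (fun n => u (n + T) + p * ∑ k ∈ range T, u (n + k)) atTop
      (𝓝 (L + p * ∑ _k ∈ range T, L)) :=
    (hL.comp (tendsto_add_atTop_nat T)).add
      ((tendsto_finsetSum _ fun k _ => hL.comp (tendsto_add_atTop_nat k)).const_mul p)
  simp only [hu.conserved] at hW
  have hL' := tendsto_nhds_unique tendsto_const_nhds hW
  rw [sum_const, card_range, nsmul_eq_mul] at hL'
  rwa [hL', show L + p * (T * L) = L * (1 + T * p) by ring,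
    mul_div_cancel_right₀ _ (by positivity)]

end RenewalRecurrence

/-- There are `C(n - x T, x)` orders of `x` gaps of length `T + 1` and `n - x (T + 1)` gaps of
length `1`. -/
noncomputable def renewalTerm (T : ℕ) (p : ℝ) (n x : ℕ) : ℝ :=
  ((n - x * T).choose x : ℝ) * p ^ x * (1 - p) ^ (n - x * (T + 1))

noncomputable def renewalSeq (T : ℕ) (p : ℝ) (n : ℕ) : ℝ :=
  ∑ x ∈ range (n / (T + 1) + 1), renewalTerm T p n x

section RenewalSeq

variable {T : ℕ} {p : ℝ}

lemma renewalTerm_eq_zero {n x : ℕ} (h : n < x * (T + 1)) : renewalTerm T p n x = 0 := by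
  have hx : 0 < x := Nat.pos_of_ne_zero (by rintro rfl; simp at h)
  rw [mul_add_one] at h
  rw [renewalTerm, Nat.choose_eq_zero_of_lt (by omega), Nat.cast_zero, zero_mul, zero_mul]

lemma renewalTerm_zero (n : ℕ) : renewalTerm T p n 0 = (1 - p) ^ n := by
  simp [renewalTerm]

lemma renewalTerm_add_succ (n x : ℕ) :
    renewalTerm T p (n + T + 1) (x + 1) =
      (1 - p) * renewalTerm T p (n + T) (x + 1) + p * renewalTerm T p n x := by
  rcases lt_or_ge n (x * (T + 1)) with h | h
  · rw [renewalTerm_eq_zero h, renewalTerm_eq_zero (by linarith),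
      renewalTerm_eq_zero (by linarith)]
    ring
  obtain ⟨r, rfl⟩ := Nat.exists_eq_add_of_le h
  have hxT : (x + 1) * T = x * T + T := by ring
  have hxT' : x * (T + 1) = x * T + x := by ring
  have hxT'' : (x + 1) * (T + 1) = x * T + x + T + 1 := by ring
  simp only [renewalTerm, hxT, hxT', hxT'']
  rw [show x * T + x + r + T + 1 - (x * T + T) = x + r + 1 by omega,
    show x * T + x + r + T - (x * T + T) = x + r by omega,
    show x * T + x + r - x * T = x + r by omega,
    show x * T + x + r + T + 1 - (x * T + x + T + 1) = r by omega,
    show x * T + x + r - (x * T + x) = r by omega, Nat.choose_succ_succ']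
  rcases r with _ | s
  · rw [add_zero, Nat.choose_succ_self, Nat.choose_self]
    push_cast
    ring
  · rw [show x * T + x + (s + 1) + T - (x * T + x + T + 1) = s by omega]
    push_cast
    ring

lemma sum_range_renewalTerm {n N : ℕ} (h : n < N * (T + 1)) :
    ∑ x ∈ range N, renewalTerm T p n x = renewalSeq T p n := by
  have hN : n / (T + 1) + 1 ≤ N := (Nat.div_lt_iff_lt_mul T.succ_pos).2 h
  refine eventually_constant_sum (fun x hx => renewalTerm_eq_zero ?_) hN
  exact (Nat.div_lt_iff_lt_mul T.succ_pos).1 hx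

lemma renewalSeq_of_le {k : ℕ} (hk : k ≤ T) : renewalSeq T p k = (1 - p) ^ k := by
  rw [← sum_range_renewalTerm (N := 1) (by omega), sum_range_one, renewalTerm_zero]

lemma renewalRecurrence_renewalSeq : RenewalRecurrence T p (renewalSeq T p) := fun n => by
  have hN : n < (n + T + 1) * (T + 1) := by nlinarith
  rw [← sum_range_renewalTerm (N := n + T + 2) (by nlinarith),
    ← sum_range_renewalTerm (N := n + T + 2) (by nlinarith), ← sum_range_renewalTerm hN,
    sum_range_succ' _ (n + T + 1), sum_range_succ' _ (n + T + 1)]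
  simp only [renewalTerm_add_succ, renewalTerm_zero, sum_add_distrib, ← mul_sum]
  ring

lemma renewalSeq_conserved : renewalSeq T p T + p * ∑ k ∈ range T, renewalSeq T p k = 1 := by
  rw [renewalSeq_of_le le_rfl,
    sum_congr rfl fun k hk => renewalSeq_of_le (mem_range.1 hk).le]
  linear_combination -(geom_sum_mul (1 - p) T)

lemma tendsto_renewalSeq (hp0 : 0 < p) (hp1 : p < 1) :
    Tendsto (renewalSeq T p) atTop (𝓝 (1 / (1 + T * p))) := by
  simpa only [renewalSeq_conserved] using renewalRecurrence_renewalSeq.tendsto hp0 hp1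

end RenewalSeq

theorem stmt_5_general (tstar : ℕ) (p : ℝ) (hp0 : 0 < p) (hp1 : p < 1) (m : ℕ) :
    Tendsto (fun t : ℕ =>
        ∑ x ∈ Finset.range ((t - 1) / (tstar + 1) + 1),
          ((t - (m + 1) - x * tstar).choose x : ℝ)
            * (if (m + 1) + x * (tstar + 1) ≤ t then (1 : ℝ) else 0)
            * p ^ (x + 1) * (1 - p) ^ (t - (m + 1) - x * (tstar + 1)))
      atTop (nhds (p / (1 + (tstar : ℝ) * p))) := by
  have hlim := ((tendsto_renewalSeq (T := tstar) hp0 hp1).comp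
    (tendsto_sub_atTop_nat (m + 1))).const_mul p
  rw [mul_one_div] at hlim
  refine hlim.congr' ?_
  filter_upwards [eventually_ge_atTop (m + 1)] with t ht
  have hN : t - (m + 1) < ((t - 1) / (tstar + 1) + 1) * (tstar + 1) :=
    lt_of_le_of_lt (by omega) ((Nat.div_lt_iff_lt_mul tstar.succ_pos).1 (Nat.lt_succ_self _))
  rw [Function.comp_apply, ← sum_range_renewalTerm hN, mul_sum]
  refine sum_congr rfl fun x _ => ?_
  split_ifs with h
  · rw [renewalTerm]
    ring
  · rw [renewalTerm_eq_zero (by omega)]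
    ring

theorem stmt_5 (tstar : ℕ) (p : ℝ) (hp0 : 0 < p) (hp1 : p < 1) (m : ℕ) (hm : m ≤ tstar) :
    Tendsto (fun t : ℕ =>
        ∑ x ∈ Finset.range ((t - 1) / (tstar + 1) + 1),
          ((t - (m + 1) - x * tstar).choose x : ℝ)
            * (if (m + 1) + x * (tstar + 1) ≤ t then (1 : ℝ) else 0)
            * p ^ (x + 1) * (1 - p) ^ (t - (m + 1) - x * (tstar + 1)))
      atTop (nhds (p / (1 + (tstar : ℝ) * p))) :=
  stmt_5_general tstar p hp0 hp1 m
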